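/- arXiv:2102.07705 — 3 statements merged into one kernel-verified Lean document; each statement's English description precedes it below -/
import Mathlib

section
/- For every n ≥ 1 and every oriented path P on n vertices, there exists a finite acyclic digraph D such that for every 2-coloring c : V(D) → Fin 2 there is an induced copy of P in D all of whose vertices receive the same color under c; equivalently, D admits no P-free 2-coloring. -/
/-- A simple digraph on vertex type `V`: no loops and no anti-parallel arcs. -/
structure Digraph' (V : Type*) : Type _ where
  Adj : V → V → Prop
  loopless : ∀ v, ¬ Adj v v
  asymm : ∀ u v, Adj u v → ¬ Adj v u

/-- An induced copy of the digraph `F` in the digraph `D`, given by the embedding `φ`. -/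
def IsInducedCopy {α β : Type*} (F : Digraph' α) (D : Digraph' β) (φ : α → β) : Prop :=
  Function.Injective φ ∧ ∀ u v : α, D.Adj (φ u) (φ v) ↔ F.Adj u v

/-- The image of `φ` is monochromatic under the coloring `c`. -/
def Monochromatic {α β : Type*} {k : ℕ} (c : β → Fin k) (φ : α → β) : Prop :=
  ∃ i : Fin k, ∀ u : α, c (φ u) = i

/-- The coloring `c` of `D` is `F`-free: no induced copy of `F` in `D` is monochromatic. -/
def IsFFreeColoring {α β : Type*} (F : Digraph' α) (D : Digraph' β) {k : ℕ}
    (c : β → Fin k) : Prop :=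
  ∀ φ : α → β, IsInducedCopy F D φ → ¬ Monochromatic c φ

/-- A digraph is acyclic if it contains no directed cycle. -/
def Digraph'.Acyclic {β : Type*} (D : Digraph' β) : Prop :=
  ∀ v : β, ¬ Relation.TransGen D.Adj v v

/-- The underlying simple graph of a digraph. -/
def Digraph'.underlying {V : Type*} (D : Digraph' V) : SimpleGraph V where
  Adj u v := D.Adj u v ∨ D.Adj v u
  symm := ⟨fun _ _ h => Or.symm h⟩
  loopless := ⟨fun v h => h.elim (D.loopless v) (D.loopless v)⟩

/-- `P` is an oriented path on `n` vertices `0, 1, …, n-1` (in path order):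
for each `i < n-1` exactly one of `(i, i+1)`, `(i+1, i)` is an arc (exactness of the choice
is already guaranteed by `asymm`), and there are no other arcs. -/
def IsOrientedPath {n : ℕ} (P : Digraph' (Fin n)) : Prop :=
  (∀ u v : Fin n, P.Adj u v → u.val + 1 = v.val ∨ v.val + 1 = u.val) ∧
  (∀ i : Fin n, ∀ h : i.val + 1 < n, P.Adj i ⟨i.val + 1, h⟩ ∨ P.Adj ⟨i.val + 1, h⟩ i)

/-!
Fix the oriented path `P` on `0, …, n-1`. By induction on `k` we build a finite acyclic digraph
`D` with a set `S` of vertices such that every 2-coloring of `D` either has a monochromatic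
induced copy of `P`, or, for each color, a monochromatic induced copy of the subpath `0, …, k`
that meets `S` exactly in the image of `k`. For `k = 0` take `D = P` and `S = V(P)`: a coloring
of `P` is either constant or uses both colors. For the step take two copies of `D` and put all
arcs between the two copies of `S`, oriented like the arc between `k` and `k + 1` in `P`. If
neither copy contains a monochromatic `P`, a copy of `0, …, k` of color `i` in the first copy,
followed by the endpoint `w ∈ S` of a copy of color `i` in the second one, is an induced copy of
`0, …, k + 1`, and it meets the second copy of `S` only in `w`. All arcs between the two copies
go the same way, so the new digraph is again acyclic. For `k = n - 1` both alternatives give a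
monochromatic `P`.
-/

open Set Function

variable {α β γ : Type*}

def IsInducedCopyOn (A : Set α) (F : Digraph' α) (D : Digraph' β) (φ : α → β) : Prop :=
  InjOn φ A ∧ ∀ u ∈ A, ∀ v ∈ A, D.Adj (φ u) (φ v) ↔ F.Adj u v

section InducedCopy

variable {A : Set α} {F : Digraph' α} {D : Digraph' β} {E : Digraph' γ} {φ ψ : α → β}

theorem isInducedCopyOn_univ : IsInducedCopyOn univ F D φ ↔ IsInducedCopy F D φ := by
  simp [IsInducedCopyOn, IsInducedCopy, injOn_univ]

theorem IsInducedCopy.comp {f : β → γ} (hf : IsInducedCopy D E f) (hφ : IsInducedCopy F D φ) :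
    IsInducedCopy F E (f ∘ φ) :=
  ⟨hf.1.comp hφ.1, fun u v => (hf.2 _ _).trans (hφ.2 u v)⟩

theorem IsInducedCopy.comp_on {f : β → γ} (hf : IsInducedCopy D E f)
    (hφ : IsInducedCopyOn A F D φ) : IsInducedCopyOn A F E (f ∘ φ) :=
  ⟨hf.1.comp_injOn hφ.1, fun u hu v hv => (hf.2 _ _).trans (hφ.2 u hu v hv)⟩

theorem IsInducedCopyOn.congr (hφ : IsInducedCopyOn A F D φ) (h : EqOn φ ψ A) :
    IsInducedCopyOn A F D ψ :=
  ⟨hφ.1.congr h, fun u hu v hv => by rw [← h hu, ← h hv]; exact hφ.2 u hu v hv⟩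

theorem Set.Subsingleton.isInducedCopyOn (hA : A.Subsingleton) : IsInducedCopyOn A F D φ :=
  ⟨hA.injOn φ, fun u hu v hv => by
    obtain rfl := hA hu hv
    exact iff_of_false (D.loopless _) (F.loopless _)⟩

theorem IsInducedCopyOn.insert {a : α} (hφ : IsInducedCopyOn A F D φ) (ha : a ∉ A)
    (hφa : φ a ∉ φ '' A) (hto : ∀ u ∈ A, D.Adj (φ u) (φ a) ↔ F.Adj u a)
    (hfrom : ∀ v ∈ A, D.Adj (φ a) (φ v) ↔ F.Adj a v) :
    IsInducedCopyOn (insert a A) F D φ := by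
  refine ⟨(injOn_insert ha).2 ⟨hφ.1, hφa⟩, ?_⟩
  rintro u (rfl | hu) v (rfl | hv)
  · exact iff_of_false (D.loopless _) (F.loopless _)
  · exact hfrom v hv
  · exact hto u hu
  · exact hφ.2 u hu v hv

end InducedCopy

namespace Digraph'

def comap (f : α → β) (D : Digraph' β) : Digraph' α where
  Adj x y := D.Adj (f x) (f y)
  loopless x := D.loopless (f x)
  asymm x y := D.asymm (f x) (f y)

theorem Acyclic.comap {D : Digraph' β} (hD : D.Acyclic) (f : α → β) : (D.comap f).Acyclic :=
  fun v hv => hD (f v) (Relation.TransGen.lift f (fun _ _ h => h) _ _ hv)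

theorem isInducedCopy_comap_symm (D : Digraph' β) (e : β ≃ γ) :
    IsInducedCopy D (D.comap e.symm) e :=
  ⟨e.injective, fun u v => by simp [comap]⟩

def double (D : Digraph' β) (S : Set β) (fwd : Prop) : Digraph' (β ⊕ β) where
  Adj x y := match x, y with
    | .inl a, .inl b => D.Adj a b
    | .inr a, .inr b => D.Adj a b
    | .inl a, .inr b => fwd ∧ a ∈ S ∧ b ∈ S
    | .inr a, .inl b => ¬fwd ∧ b ∈ S ∧ a ∈ S
  loopless
    | .inl a => D.loopless a
    | .inr a => D.loopless a
  asymm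
    | .inl a, .inl b => D.asymm a b
    | .inr a, .inr b => D.asymm a b
    | .inl _, .inr _ => fun h h' => h'.1 h.1
    | .inr _, .inl _ => fun h h' => h.1 h'.1

section Double

variable {D : Digraph' β} {S : Set β} {fwd : Prop}

@[simp]
theorem double_adj_inl_inr {a b : β} :
    (D.double S fwd).Adj (.inl a) (.inr b) ↔ fwd ∧ a ∈ S ∧ b ∈ S :=
  Iff.rfl

@[simp]
theorem double_adj_inr_inl {a b : β} :
    (D.double S fwd).Adj (.inr a) (.inl b) ↔ ¬fwd ∧ b ∈ S ∧ a ∈ S :=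
  Iff.rfl

theorem isInducedCopy_inl : IsInducedCopy D (D.double S fwd) Sum.inl :=
  ⟨Sum.inl_injective, fun _ _ => Iff.rfl⟩

theorem isInducedCopy_inr : IsInducedCopy D (D.double S fwd) Sum.inr :=
  ⟨Sum.inr_injective, fun _ _ => Iff.rfl⟩

theorem Acyclic.double (hD : D.Acyclic) : (D.double S fwd).Acyclic := by
  have key : ∀ x y, Relation.TransGen (D.double S fwd).Adj x y →
      match x, y with
      | .inl a, .inl b => Relation.TransGen D.Adj a b
      | .inr a, .inr b => Relation.TransGen D.Adj a b
      | .inl _, .inr _ => fwd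
      | .inr _, .inl _ => ¬fwd := by
    intro x y h
    induction h with
    | @single y h =>
      rcases x with a | a <;> rcases y with b | b <;> first | exact .single h | exact h.1
    | @tail y z _ h ih =>
      rcases x with a | a <;> rcases y with b | b <;> rcases z with c | c <;>
        first | exact ih.tail h | exact h.1 | exact ih | exact (h.1 ih).elim | exact (ih h.1).elim
  rintro (a | a) h <;> exact hD a (key _ _ h)

end Double

end Digraph'

namespace IsOrientedPath

variable {n : ℕ} {P : Digraph' (Fin n)}

theorem acyclic (hP : IsOrientedPath P) : P.Acyclic := by
  -- a directed walk in an oriented path is monotone: it cannot turn back along the arc it used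
  have key : ∀ u v : Fin n, Relation.TransGen P.Adj u v →
      (u < v ∧ ∃ w : Fin n, w.val + 1 = v.val ∧ P.Adj w v) ∨
        (v < u ∧ ∃ w : Fin n, v.val + 1 = w.val ∧ P.Adj w v) := by
    intro u v h
    induction h with
    | @single v h =>
      rcases hP.1 _ _ h with h' | h'
      · exact .inl ⟨Fin.lt_def.2 (by omega), u, h', h⟩
      · exact .inr ⟨Fin.lt_def.2 (by omega), u, h', h⟩
    | @tail v z _ h ih =>
      rcases hP.1 _ _ h with hvz | hzv <;> rcases ih with ⟨huv, w, hw, hwv⟩ | ⟨hvu, w, hw, hwv⟩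
      · exact .inl ⟨Fin.lt_def.2 (by rw [Fin.lt_def] at huv; omega), v, hvz, h⟩
      · obtain rfl : w = z := Fin.ext (by omega)
        exact (P.asymm _ _ h hwv).elim
      · obtain rfl : w = z := Fin.ext (by omega)
        exact (P.asymm _ _ h hwv).elim
      · exact .inr ⟨Fin.lt_def.2 (by rw [Fin.lt_def] at hvu; omega), v, hzv, h⟩
  intro v hv
  rcases key v v hv with ⟨h, -⟩ | ⟨h, -⟩ <;> exact lt_irrefl v h

theorem adj_succ_iff (hP : IsOrientedPath P) {k : ℕ} (hk : k + 1 < n) {u : Fin n}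
    (hu : u.val ≤ k) :
    P.Adj u ⟨k + 1, hk⟩ ↔ u.val = k ∧ P.Adj ⟨k, Nat.lt_of_succ_lt hk⟩ ⟨k + 1, hk⟩ := by
  constructor
  · intro h
    obtain rfl : u = ⟨k, Nat.lt_of_succ_lt hk⟩ :=
      Fin.ext (by have := hP.1 _ _ h; simp only at this ⊢; omega)
    exact ⟨rfl, h⟩
  · rintro ⟨hu', h⟩
    obtain rfl : u = ⟨k, Nat.lt_of_succ_lt hk⟩ := Fin.ext hu'
    exact h

theorem succ_adj_iff (hP : IsOrientedPath P) {k : ℕ} (hk : k + 1 < n) {v : Fin n}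
    (hv : v.val ≤ k) :
    P.Adj ⟨k + 1, hk⟩ v ↔ v.val = k ∧ ¬P.Adj ⟨k, Nat.lt_of_succ_lt hk⟩ ⟨k + 1, hk⟩ := by
  constructor
  · intro h
    obtain rfl : v = ⟨k, Nat.lt_of_succ_lt hk⟩ :=
      Fin.ext (by have := hP.1 _ _ h; simp only at this ⊢; omega)
    exact ⟨rfl, P.asymm _ _ h⟩
  · rintro ⟨hv', h⟩
    obtain rfl : v = ⟨k, Nat.lt_of_succ_lt hk⟩ := Fin.ext hv'
    exact (hP.2 ⟨k, Nat.lt_of_succ_lt hk⟩ hk).resolve_left h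

end IsOrientedPath

theorem exists_acyclic_fin_of_fintype [Fintype β] {F : Digraph' α} {K : ℕ} (D : Digraph' β)
    (hD : D.Acyclic) (h : ∀ c : β → Fin K, ∃ φ, IsInducedCopy F D φ ∧ Monochromatic c φ) :
    ∃ (m : ℕ) (D' : Digraph' (Fin m)), D'.Acyclic ∧
      ∀ c : Fin m → Fin K, ∃ φ : α → Fin m, IsInducedCopy F D' φ ∧ Monochromatic c φ := by
  let e := Fintype.equivFin β
  refine ⟨_, D.comap e.symm, hD.comap _, fun c => ?_⟩
  obtain ⟨φ, hφ, hc⟩ := h (c ∘ e)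
  exact ⟨e ∘ φ, (D.isInducedCopy_comap_symm e).comp hφ, hc⟩

section PrefixCopy

variable {n : ℕ} (P : Digraph' (Fin n)) (D : Digraph' β)

-- Only the values of `φ` on `0, …, k` matter.
def IsPrefixCopy (S : Set β) (k : ℕ) (φ : Fin n → β) : Prop :=
  IsInducedCopyOn {u | u.val ≤ k} P D φ ∧ ∀ u : Fin n, u.val ≤ k → (φ u ∈ S ↔ u.val = k)

def PrefixRamsey (S : Set β) (K k : ℕ) : Prop :=
  ∀ c : β → Fin K, (∃ φ, IsInducedCopy P D φ ∧ Monochromatic c φ) ∨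
    ∀ i, ∃ φ, IsPrefixCopy P D S k φ ∧ ∀ u : Fin n, u.val ≤ k → c (φ u) = i

theorem prefixRamsey_self : PrefixRamsey P P univ 2 0 := by
  intro c
  by_cases hc : ∀ i, ∃ x, c x = i
  · refine .inr fun i => ?_
    obtain ⟨x, hx⟩ := hc i
    have hsub : {u : Fin n | u.val ≤ 0}.Subsingleton := fun u hu v hv =>
      Fin.ext (by simp only [mem_ofPred_eq] at hu hv; omega)
    exact ⟨fun _ => x, ⟨hsub.isInducedCopyOn, fun u hu => iff_of_true (mem_univ x) (by omega)⟩,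
      fun _ _ => hx⟩
  · push Not at hc
    obtain ⟨i, hi⟩ := hc
    have other : ∀ a b : Fin 2, a ≠ b → a = b.rev := by decide
    exact .inl ⟨id, ⟨injective_id, fun _ _ => Iff.rfl⟩, i.rev, fun u => other _ _ (hi u)⟩

variable {P D} {S : Set β} {k : ℕ}

theorem IsPrefixCopy.extend (hP : IsOrientedPath P) (hk : k + 1 < n) {φ : Fin n → β}
    (hφ : IsPrefixCopy P D S k φ) {w : β} (hw : w ∈ S) :
    IsPrefixCopy P (D.double S (P.Adj ⟨k, Nat.lt_of_succ_lt hk⟩ ⟨k + 1, hk⟩)) (Sum.inr '' S)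
      (k + 1) (update (Sum.inl ∘ φ) ⟨k + 1, hk⟩ (.inr w)) := by
  set last : Fin n := ⟨k + 1, hk⟩
  set ψ := update (Sum.inl ∘ φ) last (.inr w)
  have hψ : ∀ u : Fin n, u.val ≤ k → ψ u = .inl (φ u) := fun u hu =>
    update_of_ne (Fin.ne_of_val_ne (by simp only [last]; omega)) _ _
  have hψlast : ψ last = .inr w := update_self ..
  have hprefix : {u : Fin n | u.val ≤ k + 1} = insert last {u | u.val ≤ k} := by
    ext u; simp only [mem_ofPred_eq, mem_insert_iff, last, Fin.ext_iff]; omega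
  have hS : ∀ u : Fin n, u.val ≤ k → (φ u ∈ S ∧ w ∈ S ↔ u.val = k) := fun u hu => by
    simp [hw, hφ.2 u hu]
  refine ⟨?_, fun u hu => ?_⟩
  · rw [hprefix]
    refine (Digraph'.isInducedCopy_inl.comp_on hφ.1 |>.congr fun u hu => (hψ u hu).symm).insert
      (by simp [last]) ?_ (fun u hu => ?_) (fun v hv => ?_)
    · rintro ⟨u, hu, h⟩
      simp [hψ u hu, hψlast] at h
    · rw [hψ u hu, hψlast, hP.adj_succ_iff hk hu, Digraph'.double_adj_inl_inr, hS u hu, and_comm]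
    · rw [hψ v hv, hψlast, hP.succ_adj_iff hk hv, Digraph'.double_adj_inr_inl, hS v hv, and_comm]
  · rcases Nat.lt_or_eq_of_le hu with hu | hu
    · rw [hψ u (by omega)]
      exact iff_of_false (by simp) (by omega)
    · obtain rfl : u = last := Fin.ext hu
      exact iff_of_true ⟨w, hw, hψlast.symm⟩ rfl

theorem PrefixRamsey.double (hP : IsOrientedPath P) (hk : k + 1 < n) {K : ℕ}
    (h : PrefixRamsey P D S K k) :
    PrefixRamsey P (D.double S (P.Adj ⟨k, Nat.lt_of_succ_lt hk⟩ ⟨k + 1, hk⟩)) (Sum.inr '' S) K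
      (k + 1) := by
  intro c
  rcases h (c ∘ Sum.inl) with ⟨φ, hφ, hc⟩ | hl
  · exact .inl ⟨_, Digraph'.isInducedCopy_inl.comp hφ, hc⟩
  rcases h (c ∘ Sum.inr) with ⟨φ, hφ, hc⟩ | hr
  · exact .inl ⟨_, Digraph'.isInducedCopy_inr.comp hφ, hc⟩
  refine .inr fun i => ?_
  obtain ⟨φ, hφ, hφc⟩ := hl i
  obtain ⟨ψ, hψ, hψc⟩ := hr i
  refine ⟨_, hφ.extend hP hk ((hψ.2 ⟨k, Nat.lt_of_succ_lt hk⟩ le_rfl).2 rfl), fun u hu => ?_⟩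
  rcases Nat.lt_or_eq_of_le hu with hu | hu
  · rw [update_of_ne (Fin.ne_of_val_ne hu.ne)]
    exact hφc u (by omega)
  · obtain rfl : u = ⟨k + 1, hk⟩ := Fin.ext hu
    rw [update_self]
    exact hψc _ le_rfl

theorem IsOrientedPath.exists_prefixRamsey (hP : IsOrientedPath P) (k : ℕ) (hk : k < n) :
    ∃ (β : Type) (_ : Fintype β) (D : Digraph' β) (S : Set β),
      D.Acyclic ∧ PrefixRamsey P D S 2 k := by
  induction k with
  | zero => exact ⟨Fin n, inferInstance, P, univ, hP.acyclic, prefixRamsey_self P⟩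
  | succ k ih =>
    obtain ⟨β, _, D, S, hD, hRamsey⟩ := ih (by omega)
    exact ⟨β ⊕ β, inferInstance, _, _, hD.double, hRamsey.double hP hk⟩

end PrefixCopy

/-- For every `n ≥ 1` and every oriented path `P` on `n` vertices there is a finite acyclic
digraph `D` such that every `2`-coloring of `D` has a monochromatic induced copy of `P`;
equivalently, `D` admits no `P`-free `2`-coloring. -/
theorem statement0 {n : ℕ} (hn : 1 ≤ n) (P : Digraph' (Fin n)) (hP : IsOrientedPath P) :
    ∃ (m : ℕ) (D : Digraph' (Fin m)), D.Acyclic ∧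
      ∀ c : Fin m → Fin 2, ∃ φ : Fin n → Fin m,
        IsInducedCopy P D φ ∧ Monochromatic c φ := by
  obtain ⟨β, _, D, S, hD, hRamsey⟩ := hP.exists_prefixRamsey (n - 1) (by omega)
  refine exists_acyclic_fin_of_fintype D hD fun c => (hRamsey c).elim id fun h => ?_
  obtain ⟨φ, ⟨hφ, -⟩, hc⟩ := h 0
  have hprefix : {u : Fin n | u.val ≤ n - 1} = univ := eq_univ_of_forall fun u => by
    simp only [mem_ofPred_eq]; omega
  rw [hprefix, isInducedCopyOn_univ] at hφ
  exact ⟨φ, hφ, 0, fun u => hc u (by omega)⟩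
end

section
/- Let T be an oriented tree on at least 3 vertices with exactly ℓ leaves, and let lrem(T) denote the induced subdigraph of T on its non-leaf vertices. Let D be any finite digraph, and let D' be the digraph obtained from D by adding, for each vertex v of D, 2ℓ pairwise disjoint new copies T⁺₁,…,T⁺_ℓ, T⁻₁,…,T⁻_ℓ of T, together with all arcs (v,u) for u a vertex of a copy T⁺_j and all arcs (u,v) for u a vertex of a copy T⁻_j (j = 1,…,ℓ). Then D' admits a T-free 2-coloring if and only if D admits a lrem(T)-free 2-coloring. Moreover, D' is acyclic if and only if D is acyclic. -/
/-- `v` is a leaf of the digraph `T`: it has exactly one neighbor in the underlying graph. -/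
def IsLeaf {α : Type*} (T : Digraph' α) (v : α) : Prop :=
  ∃! w : α, T.underlying.Adj v w

/-- The induced subdigraph of `D` on the vertex set `S`. -/
def inducedSub {α : Type*} (D : Digraph' α) (S : Set α) : Digraph' S where
  Adj u v := D.Adj u.1 v.1
  loopless v := D.loopless v.1
  asymm u v h := D.asymm u.1 v.1 h

/-- The arc relation of the digraph `D'` obtained from `D` by adding, for each vertex `v` of
`D`, `2ℓ` disjoint copies of `T` (indexed by `Fin ℓ × Bool`; `true` the "plus" copies,
`false` the "minus" copies), with all arcs from `v` into each plus copy and all arcs from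
each minus copy into `v`. -/
def attachTreesRel {V α : Type*} (D : Digraph' V) (T : Digraph' α) (ℓ : ℕ) :
    (V ⊕ (V × Fin ℓ × Bool × α)) → (V ⊕ (V × Fin ℓ × Bool × α)) → Prop
  | Sum.inl u, Sum.inl v => D.Adj u v
  | Sum.inl v, Sum.inr (w, _, b, _) => v = w ∧ b = true
  | Sum.inr (w, _, b, _), Sum.inl v => v = w ∧ b = false
  | Sum.inr (v, j, b, u), Sum.inr (v', j', b', u') => v = v' ∧ j = j' ∧ b = b' ∧ T.Adj u u'

open Relation

namespace SimpleGraph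

variable {V : Type*} {G : SimpleGraph V}

theorem Preconnected.mem_of_adj_mem (hG : G.Preconnected) {S : Set V}
    (hS : ∀ a b, G.Adj a b → a ∈ S → b ∈ S) {a b : V} (ha : a ∈ S) : b ∈ S := by
  obtain ⟨p⟩ := hG a b
  induction p with
  | nil => exact ha
  | cons h _ ih => exact ih (hS _ _ h ha)

theorem Preconnected.exists_adj_mem_not_mem (hG : G.Preconnected) {S : Set V} {a b : V}
    (ha : a ∈ S) (hb : b ∉ S) : ∃ x ∈ S, ∃ y ∉ S, G.Adj x y := by
  by_contra! h
  exact hb (hG.mem_of_adj_mem (fun x y hxy hx => by_contra fun hy => h x hx y hy hxy) ha)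

end SimpleGraph

namespace Digraph'

variable {β γ : Type*}

theorem Acyclic.of_adj_map {D : Digraph' β} {E : Digraph' γ} (hE : E.Acyclic) (f : β → γ)
    (hf : ∀ a b, D.Adj a b → E.Adj (f a) (f b)) : D.Acyclic :=
  fun v hv => hE (f v) (hv.lift f hf)

theorem acyclic_of_adj_lt [Preorder γ] {D : Digraph' β} (f : β → γ)
    (hf : ∀ a b, D.Adj a b → f a < f b) : D.Acyclic := by
  intro v hv
  have hlt := hv.lift f hf
  rw [transGen_eq_self] at hlt
  exact lt_irrefl _ hlt

theorem Acyclic.exists_adj_lt [Finite β] {D : Digraph' β} (hD : D.Acyclic) :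
    ∃ f : β → ℕ, ∀ a b, D.Adj a b → f a < f b :=
  ⟨fun a => {x | TransGen D.Adj x a}.ncard, fun _ _ hab => Set.ncard_lt_ncard
    ⟨fun _ hx => hx.tail hab, fun h => hD _ (h (TransGen.single hab))⟩ (Set.toFinite _)⟩

theorem exists_walk_of_reflTransGen (D : Digraph' β) {u v : β} (h : ReflTransGen D.Adj u v) :
    ∃ p : D.underlying.Walk u v, ∀ d ∈ p.darts, D.Adj d.fst d.snd := by
  induction h using ReflTransGen.head_induction_on with
  | refl => exact ⟨.nil, by simp⟩
  | head hab _ ih =>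
    obtain ⟨p, hp⟩ := ih
    exact ⟨.cons (show D.underlying.Adj _ _ from Or.inl hab) p, by
      rw [SimpleGraph.Walk.darts_cons]; exact List.forall_mem_cons.2 ⟨hab, hp⟩⟩

/-- A directed walk back from `w` to `u` shortens to a path, which in a forest must be the edge
`wu` itself, traversed against its orientation. -/
theorem acyclic_of_isAcyclic {D : Digraph' β} (hD : D.underlying.IsAcyclic) : D.Acyclic := by
  classical
  intro u hu
  obtain ⟨w, huw, hwu⟩ := TransGen.head'_iff.mp hu
  obtain ⟨p, hp⟩ := D.exists_walk_of_reflTransGen hwu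
  have hadj : D.underlying.Adj w u := Or.inr huw
  have hpath : p.toPath = SimpleGraph.Path.singleton hadj := (hD.subsingleton_path w u).elim _ _
  have hdart : ⟨(w, u), hadj⟩ ∈ p.darts :=
    p.darts_toPath_subset_darts (by rw [hpath]; simp [SimpleGraph.Path.singleton])
  exact D.asymm u w huw (hp _ hdart)

end Digraph'

theorem IsInducedCopy.underlying_adj_iff {α β : Type*} {F : Digraph' α} {D : Digraph' β}
    {φ : α → β} (hφ : IsInducedCopy F D φ) {u v : α} :
    D.underlying.Adj (φ u) (φ v) ↔ F.underlying.Adj u v :=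
  or_congr (hφ.2 u v) (hφ.2 v u)

theorem exists_apply_eq_of_not_monochromatic {α β : Type*} {c : β → Fin 2} {φ : α → β}
    (h : ¬ Monochromatic c φ) (i : Fin 2) : ∃ u, c (φ u) = i := by
  by_contra! hne
  exact h ⟨1 - i, fun u => by have := hne u; omega⟩

section Leaves

variable {α : Type*} {T : Digraph' α}

theorem IsLeaf.adj_left_iff {x w : α} (hx : IsLeaf T x) (hxw : T.underlying.Adj x w)
    {y : α} : T.Adj x y ↔ y = w ∧ ¬ T.Adj w x := by
  constructor
  · intro h
    obtain rfl := hx.unique (Or.inl h) hxw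
    exact ⟨rfl, T.asymm x y h⟩
  · rintro ⟨rfl, h⟩
    exact hxw.resolve_right h

theorem IsLeaf.adj_right_iff {x w : α} (hx : IsLeaf T x) (hxw : T.underlying.Adj x w)
    {y : α} : T.Adj y x ↔ y = w ∧ T.Adj w x := by
  constructor
  · intro h
    obtain rfl := hx.unique (Or.inr h) hxw
    exact ⟨rfl, h⟩
  · rintro ⟨rfl, h⟩
    exact h

theorem IsLeaf.not_isLeaf_of_adj [Fintype α] (hconn : T.underlying.Preconnected)
    (hcard : 3 ≤ Fintype.card α) {x w : α} (hx : IsLeaf T x) (hxw : T.underlying.Adj x w) :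
    ¬ IsLeaf T w := by
  classical
  intro hw
  have hclosed : ∀ a b, T.underlying.Adj a b → a ∈ ({x, w} : Set α) → b ∈ ({x, w} : Set α) := by
    rintro a b hab (rfl | rfl)
    · simp [hx.unique hab hxw]
    · simp [hw.unique hab hxw.symm]
  have huniv : (Finset.univ : Finset α) ⊆ {x, w} := fun b _ => by
    simpa using hconn.mem_of_adj_mem hclosed (a := x) (by simp)
  have := (Finset.card_le_card huniv).trans Finset.card_le_two
  rw [Finset.card_univ] at this
  omega

end Leaves

section AttachTrees

variable {V α : Type*} {D : Digraph' V} {T : Digraph' α} {ℓ : ℕ}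
  {D' : Digraph' (V ⊕ (V × Fin ℓ × Bool × α))}

theorem isInducedCopy_inr (hD' : ∀ x y, D'.Adj x y ↔ attachTreesRel D T ℓ x y)
    (v : V) (j : Fin ℓ) (b : Bool) : IsInducedCopy T D' fun u => Sum.inr (v, j, b, u) :=
  ⟨fun u u' h => by simpa using h, fun u u' => by simp [hD', attachTreesRel]⟩

theorem underlying_adj_inl_inr (hD' : ∀ x y, D'.Adj x y ↔ attachTreesRel D T ℓ x y)
    (v : V) (j : Fin ℓ) (b : Bool) (u : α) :
    D'.underlying.Adj (Sum.inl v) (Sum.inr (v, j, b, u)) := by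
  cases b <;> simp [Digraph'.underlying, hD', attachTreesRel]

theorem eq_inl_or_mem_copy_of_underlying_adj_inr
    (hD' : ∀ x y, D'.Adj x y ↔ attachTreesRel D T ℓ x y) {v : V} {j : Fin ℓ} {b : Bool} {u : α}
    {y : V ⊕ (V × Fin ℓ × Bool × α)} (h : D'.underlying.Adj (Sum.inr (v, j, b, u)) y) :
    y = Sum.inl v ∨ ∃ u', y = Sum.inr (v, j, b, u') := by
  rcases y with w | ⟨w, j', b', u'⟩ <;>
    rcases h with h | h <;> simp only [hD', attachTreesRel] at h <;> simp [h]

theorem IsFFreeColoring.comp_inl_of_attachTrees [Fintype α]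
    (hD' : ∀ x y, D'.Adj x y ↔ attachTreesRel D T ℓ x y) (hconn : T.underlying.Preconnected)
    (hcard : 3 ≤ Fintype.card α) (hℓ : {v : α | IsLeaf T v}.ncard ≤ ℓ)
    {c : V ⊕ (V × Fin ℓ × Bool × α) → Fin 2} (hc : IsFFreeColoring T D' c) :
    IsFFreeColoring (inducedSub T {v : α | ¬ IsLeaf T v}) D (c ∘ Sum.inl) := by
  classical
  rintro ψ ⟨hψinj, hψadj⟩ ⟨i, hψi⟩
  let e : {v : α | IsLeaf T v} → Fin ℓ :=
    Fin.castLE (Nat.card_coe_set_eq (s := {v : α | IsLeaf T v}) ▸ hℓ) ∘ Finite.equivFin _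
  have he : Function.Injective e := (Fin.castLE_injective _).comp (Finite.equivFin _).injective
  choose p hp using fun x : {v : α | IsLeaf T v} => x.2.exists
  have hpl : ∀ x, ¬ IsLeaf T (p x) := fun x => x.2.not_isLeaf_of_adj hconn hcard (hp x)
  choose pick hpick using fun v j b =>
    exists_apply_eq_of_not_monochromatic (hc _ (isInducedCopy_inr hD' v j b)) i
  -- a leaf goes into its own copy, attached at the image of its neighbour `p x` on the side
  -- given by the orientation of the edge, at a vertex of colour `i`
  let φ (x : α) : V ⊕ (V × Fin ℓ × Bool × α) :=
    if hx : IsLeaf T x then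
      let v := ψ ⟨p ⟨x, hx⟩, hpl _⟩
      let j := e ⟨x, hx⟩
      let b := decide (T.Adj (p ⟨x, hx⟩) x)
      Sum.inr (v, j, b, pick v j b)
    else Sum.inl (ψ ⟨x, hx⟩)
  refine hc φ ⟨fun x y hxy => ?_, fun x y => ?_⟩ ⟨i, fun x => ?_⟩
  · by_cases hx : IsLeaf T x <;> by_cases hy : IsLeaf T y <;> simp [φ, hx, hy] at hxy
    · exact congrArg Subtype.val (he hxy.2.1)
    · exact congrArg Subtype.val (hψinj hxy)
  · rw [hD']
    by_cases hx : IsLeaf T x <;> by_cases hy : IsLeaf T y <;>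
      simp only [φ, hx, hy, dite_true, dite_false, attachTreesRel]
    · constructor
      · rintro ⟨-, hj, -, hadj⟩
        obtain rfl : x = y := congrArg Subtype.val (he hj)
        exact absurd hadj (T.loopless _)
      · intro hadj
        obtain rfl := ((hx.adj_left_iff (hp ⟨x, hx⟩)).1 hadj).1
        exact absurd hy (hpl _)
    · rw [hψinj.eq_iff, Subtype.mk.injEq, hx.adj_left_iff (hp ⟨x, hx⟩)]
      simp
    · rw [hψinj.eq_iff, Subtype.mk.injEq, hy.adj_right_iff (hp ⟨y, hy⟩) (y := x)]
      simp
    · exact hψadj ⟨x, hx⟩ ⟨y, hy⟩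
  · by_cases hx : IsLeaf T x
    · simp [φ, hx, hpick]
    · simpa [φ, hx] using hψi ⟨x, hx⟩

theorem isInducedCopy_inducedSub_of_comp_inl
    (hD' : ∀ x y, D'.Adj x y ↔ attachTreesRel D T ℓ x y) {S : Set α}
    {φ : α → V ⊕ (V × Fin ℓ × Bool × α)} (hφ : IsInducedCopy T D' φ) {ψ : S → V}
    (hψ : ∀ x : S, φ x = Sum.inl (ψ x)) : IsInducedCopy (inducedSub T S) D ψ :=
  ⟨fun x y h => Subtype.ext (hφ.1 (by rw [hψ, hψ, h])), fun x y => by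
    change _ ↔ T.Adj x y
    rw [← hφ.2 x y, hψ, hψ, hD']
    rfl⟩

theorem IsInducedCopy.exists_copy_of_forall_ne_inl
    (hD' : ∀ x y, D'.Adj x y ↔ attachTreesRel D T ℓ x y) (hconn : T.underlying.Preconnected)
    {φ : α → V ⊕ (V × Fin ℓ × Bool × α)} (hφ : IsInducedCopy T D' φ)
    (hinr : ∀ x v, φ x ≠ Sum.inl v) (x₀ : α) :
    ∃ v j b, ∀ x, ∃ u, φ x = Sum.inr (v, j, b, u) := by
  rcases h₀ : φ x₀ with v₀ | ⟨v, j, b, u⟩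
  · exact absurd h₀ (hinr x₀ v₀)
  refine ⟨v, j, b, fun x =>
    hconn.mem_of_adj_mem (S := {x | ∃ u, φ x = Sum.inr (v, j, b, u)}) ?_ ⟨u, h₀⟩⟩
  rintro a a' haa' ⟨ua, ha⟩
  have := eq_inl_or_mem_copy_of_underlying_adj_inr hD' (ha ▸ hφ.underlying_adj_iff.2 haa')
  exact this.resolve_left (hinr a' v)

/-- A non-leaf `x` embedded into a copy of `T` would be adjacent only to the attachment vertex
of that copy: the copy is left through that vertex, and a second neighbour inside the copy
would close a triangle with it. -/
theorem IsInducedCopy.exists_inl_of_not_isLeaf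
    (hD' : ∀ x y, D'.Adj x y ↔ attachTreesRel D T ℓ x y) (hT : T.underlying.IsTree)
    {φ : α → V ⊕ (V × Fin ℓ × Bool × α)} (hφ : IsInducedCopy T D' φ) {x₀ : α} {v₀ : V}
    (hx₀ : φ x₀ = Sum.inl v₀) {x : α} (hx : ¬ IsLeaf T x) : ∃ w, φ x = Sum.inl w := by
  classical
  rcases hxφ : φ x with w | ⟨v, j, b, u⟩
  · exact ⟨w, rfl⟩
  exfalso
  set B := {z | ∃ u, φ z = Sum.inr (v, j, b, u)}
  obtain ⟨a, ⟨ua, ha⟩, y, hyB, hay⟩ := hT.1.preconnected.exists_adj_mem_not_mem (S := B)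
    ⟨u, hxφ⟩ (by rintro ⟨_, h⟩; rw [hx₀] at h; cases h)
  have hφy : φ y = Sum.inl v :=
    (eq_inl_or_mem_copy_of_underlying_adj_inr hD'
      (ha ▸ hφ.underlying_adj_iff.2 hay)).resolve_right hyB
  have hyB : ∀ z ∈ B, T.underlying.Adj y z := by
    rintro z ⟨uz, hz⟩
    exact hφ.underlying_adj_iff.1 (by rw [hφy, hz]; exact underlying_adj_inl_inr hD' ..)
  refine hx ⟨y, (hyB x ⟨u, hxφ⟩).symm, fun z hxz => ?_⟩
  rcases eq_inl_or_mem_copy_of_underlying_adj_inr hD' (hxφ ▸ hφ.underlying_adj_iff.2 hxz)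
    with h | hzB
  · exact hφ.1 (h.trans hφy.symm)
  · exact absurd (SimpleGraph.is3Clique_triple_iff.2 ⟨(hyB x ⟨u, hxφ⟩).symm, hxz, hyB z hzB⟩)
      (hT.2.cliqueFree le_rfl _)

theorem IsFFreeColoring.attachTrees_of_inducedSub [Finite α] [Nontrivial α] [DecidableEq α]
    (hD' : ∀ x y, D'.Adj x y ↔ attachTreesRel D T ℓ x y) (hT : T.underlying.IsTree) (u₀ : α)
    {c : V → Fin 2} (hc : IsFFreeColoring (inducedSub T {v : α | ¬ IsLeaf T v}) D c) :
    IsFFreeColoring T D' (Sum.elim c fun p => if p.2.2.2 = u₀ then 0 else 1) := by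
  rintro φ hφ ⟨i, hφi⟩
  by_cases hinl : ∃ x v, φ x = Sum.inl v
  · obtain ⟨x₀, v₀, hx₀⟩ := hinl
    choose ψ hψ using fun x : {v : α | ¬ IsLeaf T v} =>
      hφ.exists_inl_of_not_isLeaf hD' hT hx₀ x.2
    refine hc ψ (isInducedCopy_inducedSub_of_comp_inl hD' hφ hψ) ⟨i, fun x => ?_⟩
    simpa [hψ] using hφi x
  · push Not at hinl
    obtain ⟨v, j, b, hκ⟩ := hφ.exists_copy_of_forall_ne_inl hD' hT.1.preconnected hinl u₀
    choose κ hκ using hκ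
    have hκsurj : Function.Surjective κ :=
      Finite.injective_iff_surjective.1 fun x y h => hφ.1 (by rw [hκ, hκ, h])
    obtain ⟨u₁, hu₁⟩ := exists_ne u₀
    obtain ⟨x₀, hx₀⟩ := hκsurj u₀
    obtain ⟨x₁, hx₁⟩ := hκsurj u₁
    have h₀ := hφi x₀
    have h₁ := hφi x₁
    simp only [hκ, hx₀, hx₁, Sum.elim_inr, hu₁, if_true, if_false] at h₀ h₁
    exact absurd (h₀.trans h₁.symm) (by decide)

theorem attachTrees_acyclic_iff [Finite V] [Finite α]
    (hD' : ∀ x y, D'.Adj x y ↔ attachTreesRel D T ℓ x y) (hT : T.Acyclic) :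
    D'.Acyclic ↔ D.Acyclic := by
  refine ⟨fun h => h.of_adj_map Sum.inl fun u v huv => (hD' _ _).2 huv, fun hD => ?_⟩
  obtain ⟨f, hf⟩ := hD.exists_adj_lt
  obtain ⟨g, hg⟩ := hT.exists_adj_lt
  -- levels: minus copies `0`, `D` itself `1`, plus copies `2`
  refine Digraph'.acyclic_of_adj_lt (Sum.elim (fun v => toLex (1, f v))
    fun p => toLex (if p.2.2.1 then 2 else 0, g p.2.2.2)) ?_
  rintro (u | ⟨w, j, b, u⟩) (v | ⟨w', j', b', u'⟩) h <;> simp only [hD', attachTreesRel] at h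
  · simpa [Prod.Lex.toLex_lt_toLex] using hf u v h
  · simp [Prod.Lex.toLex_lt_toLex, h.2]
  · simp [Prod.Lex.toLex_lt_toLex, h.2]
  · obtain ⟨-, -, rfl, h⟩ := h
    simpa [Prod.Lex.toLex_lt_toLex] using hg u u' h

end AttachTrees

/-- For an oriented tree `T` on at least `3` vertices with exactly `ℓ` leaves and
`lrem T` the induced subdigraph on the non-leaves: the digraph `D'` obtained from a finite
digraph `D` by attaching `2ℓ` copies of `T` to each vertex as above admits a `T`-free
`2`-coloring iff `D` admits a `lrem T`-free `2`-coloring; and `D'` is acyclic iff `D` is. -/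
theorem statement2 {V α : Type*} [Fintype V] [Fintype α]
    (T : Digraph' α) (hT : T.underlying.IsTree) (hcard : 3 ≤ Fintype.card α)
    (ℓ : ℕ) (hℓ : {v : α | IsLeaf T v}.ncard = ℓ)
    (D : Digraph' V)
    (D' : Digraph' (V ⊕ (V × Fin ℓ × Bool × α)))
    (hD' : ∀ x y, D'.Adj x y ↔ attachTreesRel D T ℓ x y) :
    ((∃ c : (V ⊕ (V × Fin ℓ × Bool × α)) → Fin 2, IsFFreeColoring T D' c) ↔
        (∃ c : V → Fin 2, IsFFreeColoring (inducedSub T {v : α | ¬ IsLeaf T v}) D c)) ∧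
      (D'.Acyclic ↔ D.Acyclic) := by
  classical
  have : Nontrivial α := Fintype.one_lt_card_iff_nontrivial.1 (by omega)
  refine ⟨⟨?_, ?_⟩, attachTrees_acyclic_iff hD' (Digraph'.acyclic_of_isAcyclic hT.2)⟩
  · rintro ⟨c, hc⟩
    exact ⟨_, hc.comp_inl_of_attachTrees hD' hT.1.preconnected hcard hℓ.le⟩
  · rintro ⟨c, hc⟩
    exact ⟨_, hc.attachTrees_of_inducedSub hD' hT (Classical.arbitrary α)⟩
end

section
/- Let T be an oriented tree on at least 3 vertices with exactly ℓ leaves, and let R = lrem(T) be the induced subdigraph of T on its non-leaf vertices. Let T̂ be the digraph obtained from R by adding, for each vertex r of R, 2ℓ new vertices r⁺₁,…,r⁺_ℓ, r⁻₁,…,r⁻_ℓ together with the arcs (r, r⁺_j) and (r⁻_j, r) for j = 1,…,ℓ (and no other arcs). Then T̂ contains an induced copy of T. -/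
/-- The arc relation of the digraph `T̂` obtained from `lrem T` (the induced subdigraph of
`T` on its non-leaf vertices) by adding, for each non-leaf vertex `r`, `2ℓ` new pendant
vertices: `ℓ` out-neighbors `r⁺₁, …, r⁺_ℓ` (flag `true`) and `ℓ` in-neighbors
`r⁻₁, …, r⁻_ℓ` (flag `false`), with arcs `(r, r⁺_j)` and `(r⁻_j, r)` only. -/
def hatRel {α : Type*} (T : Digraph' α) (ℓ : ℕ) :
    ({v : α // ¬ IsLeaf T v} ⊕ ({v : α // ¬ IsLeaf T v} × Fin ℓ × Bool)) →
      ({v : α // ¬ IsLeaf T v} ⊕ ({v : α // ¬ IsLeaf T v} × Fin ℓ × Bool)) → Prop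
  | Sum.inl u, Sum.inl v => T.Adj u.1 v.1
  | Sum.inl r, Sum.inr (r', _, b) => r = r' ∧ b = true
  | Sum.inr (r', _, b), Sum.inl r => r = r' ∧ b = false
  | Sum.inr _, Sum.inr _ => False

/-!
Since `T` is connected with at least three vertices, no two leaves are adjacent, so the
neighbour `r` of a leaf `v` survives in `lrem T`. Numbering the leaves by `Fin ℓ`, send `v` to
`r⁺_v` or `r⁻_v` according to the direction of the arc between `r` and `v`, and every non-leaf to
itself. Distinct leaves get distinct indices, and pendant vertices are adjacent only to their
root, which is exactly the adjacency of leaves in `T`.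
-/

theorem SimpleGraph.Preconnected.eq_or_eq_of_existsUnique_adj {V : Type*} {G : SimpleGraph V}
    (hG : G.Preconnected) {v w : V} (hv : ∃! u, G.Adj v u) (hw : ∃! u, G.Adj w u)
    (hvw : G.Adj v w) (x : V) : x = v ∨ x = w := by
  obtain ⟨_, _, hv_uniq⟩ := hv
  obtain ⟨_, _, hw_uniq⟩ := hw
  have hreach := (hG v x)
  rw [SimpleGraph.reachable_iff_reflTransGen] at hreach
  induction hreach with
  | refl => exact .inl rfl
  | tail _ hyz ih =>
    rcases ih with rfl | rfl
    · exact .inr ((hv_uniq _ hyz).trans (hv_uniq _ hvw).symm)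
    · exact .inl ((hw_uniq _ hyz).trans (hw_uniq _ hvw.symm).symm)

namespace IsLeaf

variable {α : Type*} {T : Digraph' α} {v : α}

theorem not_isLeaf_of_adj_s11 [Fintype α] (hT : T.underlying.Preconnected)
    (hcard : 3 ≤ Fintype.card α) (hv : IsLeaf T v) {w : α} (hvw : T.underlying.Adj v w) :
    ¬ IsLeaf T w := by
  classical
  intro hw
  have hsub : (Finset.univ : Finset α) ⊆ {v, w} := fun x _ => by
    rcases hT.eq_or_eq_of_existsUnique_adj hv hw hvw x with rfl | rfl <;> simp
  have := (Finset.card_le_card hsub).trans (Finset.card_le_two (a := v) (b := w))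
  rw [Finset.card_univ] at this
  omega

noncomputable def neighbor (hv : IsLeaf T v) : α := hv.exists.choose

theorem adj_neighbor (hv : IsLeaf T v) : T.underlying.Adj v hv.neighbor :=
  hv.exists.choose_spec

theorem eq_neighbor_of_adj (hv : IsLeaf T v) {w : α} (hvw : T.underlying.Adj v w) :
    w = hv.neighbor :=
  hv.unique hvw hv.adj_neighbor

end IsLeaf

section HatEmbedding

variable {α : Type*} (T : Digraph' α) {ℓ : ℕ}
  (hnl : ∀ v (hv : IsLeaf T v), ¬ IsLeaf T hv.neighbor) (e : {v : α // IsLeaf T v} → Fin ℓ)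

open Classical in
noncomputable def hatEmbedding (v : α) :
    {v : α // ¬ IsLeaf T v} ⊕ ({v : α // ¬ IsLeaf T v} × Fin ℓ × Bool) :=
  if hv : IsLeaf T v then
    Sum.inr (⟨hv.neighbor, hnl v hv⟩, e ⟨v, hv⟩, decide (T.Adj hv.neighbor v))
  else Sum.inl ⟨v, hv⟩

variable {T}

open Classical in
theorem hatEmbedding_of_isLeaf {v : α} (hv : IsLeaf T v) :
    hatEmbedding T hnl e v =
      Sum.inr (⟨hv.neighbor, hnl v hv⟩, e ⟨v, hv⟩, decide (T.Adj hv.neighbor v)) := by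
  simp [hatEmbedding, hv]

theorem hatEmbedding_of_not_isLeaf {v : α} (hv : ¬ IsLeaf T v) :
    hatEmbedding T hnl e v = Sum.inl ⟨v, hv⟩ := by
  simp [hatEmbedding, hv]

theorem hatEmbedding_injective (he : Function.Injective e) :
    Function.Injective (hatEmbedding T hnl e) := by
  intro u v huv
  by_cases hu : IsLeaf T u <;> by_cases hv : IsLeaf T v <;>
    simp [hatEmbedding_of_isLeaf, hatEmbedding_of_not_isLeaf, hu, hv] at huv
  · exact congrArg Subtype.val (he huv.2.1)
  · exact huv

theorem hatRel_hatEmbedding_iff (u v : α) :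
    hatRel T ℓ (hatEmbedding T hnl e u) (hatEmbedding T hnl e v) ↔ T.Adj u v := by
  by_cases hu : IsLeaf T u <;> by_cases hv : IsLeaf T v <;>
    simp only [hatEmbedding_of_isLeaf, hatEmbedding_of_not_isLeaf, hu, hv, hatRel,
      not_false_eq_true, Subtype.mk.injEq, decide_eq_true_eq, decide_eq_false_iff_not]
  · exact ⟨False.elim, fun huv => hnl u hu (hu.eq_neighbor_of_adj (.inl huv) ▸ hv)⟩
  · constructor
    · rintro ⟨rfl, hvu⟩
      exact hu.adj_neighbor.resolve_right hvu
    · intro huv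
      obtain rfl := hu.eq_neighbor_of_adj (.inl huv)
      exact ⟨rfl, T.asymm _ _ huv⟩
  · constructor
    · rintro ⟨rfl, huv⟩
      exact huv
    · intro huv
      obtain rfl := hv.eq_neighbor_of_adj (.inr huv)
      exact ⟨rfl, huv⟩

end HatEmbedding

/-- If `T` is an oriented tree on at least `3` vertices with exactly `ℓ` leaves, then the
digraph `T̂` described by `hatRel` contains an induced copy of `T`. -/
theorem statement11 {α : Type*} [Fintype α]
    (T : Digraph' α) (hT : T.underlying.IsTree) (hcard : 3 ≤ Fintype.card α)
    (ℓ : ℕ) (hℓ : {v : α | IsLeaf T v}.ncard = ℓ)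
    (That : Digraph'
      ({v : α // ¬ IsLeaf T v} ⊕ ({v : α // ¬ IsLeaf T v} × Fin ℓ × Bool)))
    (hThat : ∀ x y, That.Adj x y ↔ hatRel T ℓ x y) :
    ∃ φ : α → ({v : α // ¬ IsLeaf T v} ⊕ ({v : α // ¬ IsLeaf T v} × Fin ℓ × Bool)),
      IsInducedCopy T That φ := by
  have hnl : ∀ v (hv : IsLeaf T v), ¬ IsLeaf T hv.neighbor := fun v hv =>
    hv.not_isLeaf_of_adj_s11 hT.connected.preconnected hcard hv.adj_neighbor
  let e : {v : α // IsLeaf T v} ≃ Fin ℓ :=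
    (Finite.equivFin {v : α | IsLeaf T v}).trans (finCongr hℓ)
  exact ⟨hatEmbedding T hnl e, hatEmbedding_injective hnl e e.injective,
    fun u v => (hThat _ _).trans (hatRel_hatEmbedding_iff hnl e u v)⟩
end
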